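/- Let (P, Q, R) and (P', Q', R') be two affinely independent triples of points of the Euclidean plane E = ℝ², with associated address maps φ and φ' on the set S of sequences ℕ → {A, B, C, M}. Then the topology on S induced from E along φ coincides with the topology on S induced from E along φ'; that is, the topology on S does not depend on the choice of the nondegenerate Euclidean triangle. -/

import Mathlib

noncomputable section

/-- The Euclidean plane. -/
abbrev E := EuclideanSpace ℝ (Fin 2)

/-- The four letters indexing the mid-line subdivision maps. -/
inductive Letter : Type
  | A | B | C | M
deriving DecidableEq

open Letter

/-- The four mid-line subdivision maps on ordered triples of points of the plane. -/
def g : Letter → E × E × E → E × E × E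
  | Letter.A, (P, Q, R) => (P, midpoint ℝ P Q, midpoint ℝ P R)
  | Letter.B, (P, Q, R) => (midpoint ℝ P Q, Q, midpoint ℝ Q R)
  | Letter.C, (P, Q, R) => (midpoint ℝ P R, midpoint ℝ Q R, R)
  | Letter.M, (P, Q, R) => (midpoint ℝ Q R, midpoint ℝ P R, midpoint ℝ P Q)

/-- The set of the three vertices of a triple. -/
def vertexSet (t : E × E × E) : Set E := {t.1, t.2.1, t.2.2}

/-- The iterated triples `Δₙ`, where `Δ₀ = t` and `Δ_{n+1} = g_{s n} Δₙ`. -/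
def orbit (t : E × E × E) (s : ℕ → Letter) : ℕ → E × E × E
  | 0 => t
  | n + 1 => g (s n) (orbit t s n)

/-- The nested closed triangles `Tₙ(s)`: the convex hull of the vertices of `Δₙ`. -/
def T (t : E × E × E) (s : ℕ → Letter) (n : ℕ) : Set E :=
  convexHull ℝ (vertexSet (orbit t s n))

/-! ### Auxiliary lemmas -/

/-- Applying an affine equivalence to a triple componentwise. -/
def mapT (f : E ≃ᵃ[ℝ] E) (t : E × E × E) : E × E × E := (f t.1, f t.2.1, f t.2.2)

lemma g_mapT (f : E ≃ᵃ[ℝ] E) (l : Letter) (t : E × E × E) :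
    g l (mapT f t) = mapT f (g l t) := by
  obtain ⟨a, b, c⟩ := t
  cases l <;> simp [g, mapT, AffineEquiv.map_midpoint]

lemma orbit_mapT (f : E ≃ᵃ[ℝ] E) (t : E × E × E) (s : ℕ → Letter) (n : ℕ) :
    orbit (mapT f t) s n = mapT f (orbit t s n) := by
  induction n with
  | zero => rfl
  | succ n ih => simp [orbit, ih, g_mapT]

lemma vertexSet_mapT (f : E ≃ᵃ[ℝ] E) (t : E × E × E) :
    vertexSet (mapT f t) = f '' vertexSet t := by
  obtain ⟨a, b, c⟩ := t
  simp [vertexSet, mapT, Set.image_insert_eq]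

lemma T_mapT (f : E ≃ᵃ[ℝ] E) (t : E × E × E) (s : ℕ → Letter) (n : ℕ) :
    T (mapT f t) s n = f '' T t s n := by
  rw [T, orbit_mapT, vertexSet_mapT, T]
  have := f.toAffineMap.image_convexHull (vertexSet (orbit t s n))
  simpa using this.symm

lemma mid_dist_le {s : Set E} (hbdd : Bornology.IsBounded s) {a b c d : E}
    (ha : a ∈ s) (hb : b ∈ s) (hc : c ∈ s) (hd : d ∈ s)
    (hshare : a = c ∨ a = d ∨ b = c ∨ b = d) :
    dist (midpoint ℝ a b) (midpoint ℝ c d) ≤ Metric.diam s / 2 := by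
  have key : ∀ x y z : E, y ∈ s → z ∈ s →
      dist (midpoint ℝ x y) (midpoint ℝ x z) ≤ Metric.diam s / 2 := by
    intro x y z hy hz
    calc dist (midpoint ℝ x y) (midpoint ℝ x z) ≤ (dist x x + dist y z) / 2 :=
          dist_midpoint_midpoint_le _ _ _ _
      _ = dist y z / 2 := by rw [dist_self, zero_add]
      _ ≤ Metric.diam s / 2 := by
          gcongr
          exact Metric.dist_le_diam_of_mem hbdd hy hz
  rcases hshare with rfl | rfl | rfl | rfl
  · exact key a b d hb hd
  · rw [midpoint_comm c a]; exact key a b c hb hc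
  · rw [midpoint_comm a b]; exact key b a d ha hd
  · rw [midpoint_comm a b, midpoint_comm c b]; exact key b a c ha hc

lemma diam_g_le (l : Letter) (t : E × E × E) :
    Metric.diam (vertexSet (g l t)) ≤ Metric.diam (vertexSet t) / 2 := by
  obtain ⟨a, b, c⟩ := t
  have hfin : (vertexSet (a, b, c)).Finite := by
    simp only [vertexSet]
    exact (Set.finite_singleton _).insert _ |>.insert _
  have hbdd := hfin.isBounded
  have ha : a ∈ vertexSet (a, b, c) := by simp [vertexSet]
  have hb : b ∈ vertexSet (a, b, c) := by simp [vertexSet]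
  have hc : c ∈ vertexSet (a, b, c) := by simp [vertexSet]
  apply Metric.diam_le_of_forall_dist_le (by positivity)
  intro x hx y hy
  cases l
  case A =>
    rw [show vertexSet (g Letter.A (a, b, c)) =
        ({midpoint ℝ a a, midpoint ℝ a b, midpoint ℝ a c} : Set E) from by
      simp [g, vertexSet]] at hx hy
    simp only [Set.mem_insert_iff, Set.mem_singleton_iff] at hx hy
    rcases hx with rfl | rfl | rfl <;> rcases hy with rfl | rfl | rfl <;>
      exact mid_dist_le hbdd (by assumption) (by assumption) (by assumption)
        (by assumption) (by tauto)
  case B =>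
    rw [show vertexSet (g Letter.B (a, b, c)) =
        ({midpoint ℝ b a, midpoint ℝ b b, midpoint ℝ b c} : Set E) from by
      simp [g, vertexSet, midpoint_comm b a]] at hx hy
    simp only [Set.mem_insert_iff, Set.mem_singleton_iff] at hx hy
    rcases hx with rfl | rfl | rfl <;> rcases hy with rfl | rfl | rfl <;>
      exact mid_dist_le hbdd (by assumption) (by assumption) (by assumption)
        (by assumption) (by tauto)
  case C =>
    rw [show vertexSet (g Letter.C (a, b, c)) =
        ({midpoint ℝ c a, midpoint ℝ c b, midpoint ℝ c c} : Set E) from by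
      simp [g, vertexSet, midpoint_comm c a, midpoint_comm c b]] at hx hy
    simp only [Set.mem_insert_iff, Set.mem_singleton_iff] at hx hy
    rcases hx with rfl | rfl | rfl <;> rcases hy with rfl | rfl | rfl <;>
      exact mid_dist_le hbdd (by assumption) (by assumption) (by assumption)
        (by assumption) (by tauto)
  case M =>
    rw [show vertexSet (g Letter.M (a, b, c)) =
        ({midpoint ℝ b c, midpoint ℝ a c, midpoint ℝ a b} : Set E) from by
      simp [g, vertexSet]] at hx hy
    simp only [Set.mem_insert_iff, Set.mem_singleton_iff] at hx hy
    rcases hx with rfl | rfl | rfl <;> rcases hy with rfl | rfl | rfl <;>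
      exact mid_dist_le hbdd (by assumption) (by assumption) (by assumption)
        (by assumption) (by tauto)

lemma vertexSet_finite (t : E × E × E) : (vertexSet t).Finite := by
  obtain ⟨a, b, c⟩ := t
  simp only [vertexSet]
  exact (Set.finite_singleton _).insert _ |>.insert _

lemma diam_orbit_le (t : E × E × E) (s : ℕ → Letter) (n : ℕ) :
    Metric.diam (vertexSet (orbit t s n)) ≤ Metric.diam (vertexSet t) / 2 ^ n := by
  induction n with
  | zero => simp [orbit]
  | succ n ih =>
    calc Metric.diam (vertexSet (orbit t s (n + 1)))
        ≤ Metric.diam (vertexSet (orbit t s n)) / 2 := diam_g_le _ _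
      _ ≤ Metric.diam (vertexSet t) / 2 ^ n / 2 := by gcongr
      _ = Metric.diam (vertexSet t) / 2 ^ (n + 1) := by ring

lemma eq_of_mem_all_T (t : E × E × E) (s : ℕ → Letter) {x y : E}
    (hx : ∀ n, x ∈ T t s n) (hy : ∀ n, y ∈ T t s n) : x = y := by
  have hle : ∀ n, dist x y ≤ Metric.diam (vertexSet t) / 2 ^ n := by
    intro n
    have hbdd : Bornology.IsBounded (T t s n) :=
      isBounded_convexHull.2 (vertexSet_finite _).isBounded
    calc dist x y ≤ Metric.diam (T t s n) := Metric.dist_le_diam_of_mem hbdd (hx n) (hy n)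
      _ = Metric.diam (vertexSet (orbit t s n)) := by rw [T, convexHull_diam]
      _ ≤ Metric.diam (vertexSet t) / 2 ^ n := diam_orbit_le t s n
  have hlim : Filter.Tendsto (fun n : ℕ => Metric.diam (vertexSet t) / 2 ^ n)
      Filter.atTop (nhds 0) := by
    simp only [div_eq_mul_inv, ← inv_pow]
    simpa using (tendsto_pow_atTop_nhds_zero_of_lt_one (by norm_num : (0:ℝ) ≤ 2⁻¹)
      (by norm_num : (2:ℝ)⁻¹ < 1)).const_mul (Metric.diam (vertexSet t))
  have h0 : dist x y ≤ 0 := ge_of_tendsto hlim (Filter.Eventually.of_forall hle)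
  exact dist_le_zero.1 h0

/-- An affine equivalence of the plane sending one affinely independent triple
to another. -/
lemma exists_affineEquiv (P Q R P' Q' R' : E)
    (hind : AffineIndependent ℝ ![P, Q, R])
    (hind' : AffineIndependent ℝ ![P', Q', R']) :
    ∃ f : E ≃ᵃ[ℝ] E, f P = P' ∧ f Q = Q' ∧ f R = R' := by
  have hcard : Fintype.card (Fin 2) = Module.finrank ℝ E := by
    simp [finrank_euclideanSpace_fin]
  have lin : ∀ {A B C : E}, AffineIndependent ℝ ![A, B, C] →
      LinearIndependent ℝ ![B - A, C - A] := by
    intro A B C h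
    rw [affineIndependent_iff_linearIndependent_vsub ℝ ![A, B, C] 0] at h
    have hinj : Function.Injective
        (![(⟨1, by decide⟩ : {x : Fin 3 // x ≠ 0}), ⟨2, by decide⟩] : Fin 2 → _) := by
      intro i j hij
      fin_cases i <;> fin_cases j <;> simp_all
    have := h.comp _ hinj
    convert this using 1
    funext i
    fin_cases i <;> simp [vsub_eq_sub]
    rfl
  have li := lin hind
  have li' := lin hind'
  let b : Module.Basis (Fin 2) ℝ E := basisOfLinearIndependentOfCardEqFinrank li hcard
  let b' : Module.Basis (Fin 2) ℝ E := basisOfLinearIndependentOfCardEqFinrank li' hcard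
  let L : E ≃ₗ[ℝ] E := b.equiv b' (Equiv.refl _)
  have hb : ⇑b = ![Q - P, R - P] := coe_basisOfLinearIndependentOfCardEqFinrank li hcard
  have hb' : ⇑b' = ![Q' - P', R' - P'] := coe_basisOfLinearIndependentOfCardEqFinrank li' hcard
  have hL : ∀ i : Fin 2, L (b i) = b' i := fun i => b.equiv_apply i b' (Equiv.refl _)
  have hLQ : L (Q - P) = Q' - P' := by
    have := hL 0; rwa [hb, hb'] at this; 
  have hLR : L (R - P) = R' - P' := by
    have := hL 1; rwa [hb, hb'] at this
  refine ⟨((AffineEquiv.constVAdd ℝ E (-P)).trans L.toAffineEquiv).trans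
    (AffineEquiv.constVAdd ℝ E P'), ?_, ?_, ?_⟩
  · simp [AffineEquiv.trans_apply]
  · simp only [AffineEquiv.trans_apply, AffineEquiv.constVAdd_apply,
      LinearEquiv.coe_toAffineEquiv]
    rw [show (-P) +ᵥ Q = Q - P by rw [vadd_eq_add]; abel, hLQ]
    rw [vadd_eq_add]; abel
  · simp only [AffineEquiv.trans_apply, AffineEquiv.constVAdd_apply,
      LinearEquiv.coe_toAffineEquiv]
    rw [show (-P) +ᵥ R = R - P by rw [vadd_eq_add]; abel, hLR]
    rw [vadd_eq_add]; abel

/-- The topology on the set of address sequences induced along `φ` does not depend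
on the choice of the nondegenerate Euclidean triangle. -/
theorem induced_topology_independent_of_triangle
    (P Q R P' Q' R' : E)
    (hind : AffineIndependent ℝ ![P, Q, R])
    (hind' : AffineIndependent ℝ ![P', Q', R'])
    (φ φ' : (ℕ → Letter) → E)
    (hφ : ∀ (s : ℕ → Letter) (n : ℕ), φ s ∈ T (P, Q, R) s n)
    (hφ' : ∀ (s : ℕ → Letter) (n : ℕ), φ' s ∈ T (P', Q', R') s n) :
    TopologicalSpace.induced φ (inferInstance : TopologicalSpace E)
      = TopologicalSpace.induced φ' (inferInstance : TopologicalSpace E) := by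
  obtain ⟨f, hfP, hfQ, hfR⟩ := exists_affineEquiv P Q R P' Q' R' hind hind'
  have hmapT : mapT f (P, Q, R) = (P', Q', R') := by simp [mapT, hfP, hfQ, hfR]
  have hT : ∀ s n, T (P', Q', R') s n = f '' T (P, Q, R) s n := by
    intro s n
    rw [← hmapT, T_mapT]
  have hφ'eq : φ' = ⇑f ∘ φ := by
    funext s
    refine eq_of_mem_all_T (P', Q', R') s (hφ' s) ?_
    intro n
    rw [hT s n]
    exact ⟨φ s, hφ s n, rfl⟩
  rw [hφ'eq, ← induced_compose]
  congr 1
  exact f.toHomeomorphOfFiniteDimensional.induced_eq.symm
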